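/- arXiv:2303.00894 — 2 statements merged into one kernel-verified Lean document; each statement's English description precedes it below -/
import Mathlib

section
/- Let d ∈ ℕ, let W ⊆ ℝ^d be a finite set of weight vectors with w_true ∈ W, and let p : W → ℝ be a prior with p(w) > 0 for all w ∈ W and ∑_{w∈W} p(w) = 1. Fix 0 < β_min ≤ β_max and a sequence β_n ∈ [β_min, β_max]. Let (φ_n) be i.i.d. random vectors in ℝ^d with common distribution μ having bounded support, and let (I_n) be {−1,+1}-valued random variables, conditionally independent given (φ_n), with P(I_n = ι | φ_n) = σ(ι β_n ⟨w_true, φ_n⟩), where σ(x) = 1/(1 + exp(−x)). Assume that for every w ∈ W with w ≠ w_true, μ({φ : ⟨w, φ⟩ ≠ ⟨w_true, φ⟩}) > 0. Then the posterior P_N(w) = p(w) ∏_{n=1}^N σ(I_n β_n ⟨w, φ_n⟩) / ∑_{w'∈W} p(w') ∏_{n=1}^N σ(I_n β_n ⟨w', φ_n⟩) satisfies P_N(w_true) → 1 almost surely as N → ∞, and P_N(w) → 0 almost surely for every w ≠ w_true. -/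
/-!
Fix a wrong hypothesis `w ≠ w_true`. The square root of its one-round likelihood ratio against
`w_true` has expectation equal to the average over the query of the Bhattacharyya affinity of the
two Bernoulli response laws. That affinity never exceeds `1`, and on the queries where the two
logits differ by at least some `δ > 0` (a set of positive `μ`-measure) it is at most some `ρ < 1`,
uniformly in the round: bounded support and `β n ∈ [β_min, β_max]` confine the logits to a compact
set. So each round has expectation at most a fixed `r < 1`, by independence the product over `N`
rounds has expectation at most `r ^ N`, and Markov's inequality with Borel–Cantelli sends the
product to `0` almost surely. Hence the likelihood of every wrong hypothesis becomes negligible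
against that of `w_true`, and the posterior concentrates on `w_true`.
-/

open MeasureTheory ProbabilityTheory Filter Topology
open scoped RealInnerProductSpace ENNReal

noncomputable def logistic (x : ℝ) : ℝ := 1 / (1 + Real.exp (-x))

lemma logistic_eq_sigmoid : logistic = Real.sigmoid := by
  ext x
  rw [logistic, Real.sigmoid_def, one_div]

lemma Real.sigmoid_mem_Icc (x : ℝ) : Real.sigmoid x ∈ Set.Icc (0 : ℝ) 1 :=
  ⟨Real.sigmoid_nonneg x, Real.sigmoid_le_one x⟩

lemma Real.sqrt_mul_le_add_div_two {a b : ℝ} (ha : 0 ≤ a) (hb : 0 ≤ b) :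
    √(a * b) ≤ (a + b) / 2 :=
  (Real.sqrt_le_left (by positivity)).2 (by nlinarith [sq_nonneg (a - b)])

lemma Real.sqrt_mul_lt_add_div_two {a b : ℝ} (ha : 0 ≤ a) (hb : 0 ≤ b) (hab : a ≠ b) :
    √(a * b) < (a + b) / 2 := by
  have hsq : 0 < (a - b) ^ 2 := sq_pos_of_ne_zero (sub_ne_zero.2 hab)
  exact (Real.sqrt_lt' (by nlinarith)).2 (by nlinarith)

lemma Real.mul_sqrt_div_self (a : ℝ) {c : ℝ} (hc : 0 < c) : c * √(a / c) = √(a * c) :=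
  calc c * √(a / c) = √(c * c) * √(a / c) := by rw [Real.sqrt_mul_self hc.le]
    _ = √(a * c) := by
      rw [← Real.sqrt_mul (mul_self_nonneg c)]
      congr 1
      field_simp

/-- The Bhattacharyya coefficient of the Bernoulli laws with parameters `a` and `b`. -/
noncomputable def bernoulliAffinity (a b : ℝ) : ℝ := √(a * b) + √((1 - a) * (1 - b))

lemma continuous_bernoulliAffinity : Continuous fun q : ℝ × ℝ => bernoulliAffinity q.1 q.2 := by
  unfold bernoulliAffinity
  fun_prop

lemma bernoulliAffinity_le_one {a b : ℝ} (ha : a ∈ Set.Icc (0 : ℝ) 1)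
    (hb : b ∈ Set.Icc (0 : ℝ) 1) : bernoulliAffinity a b ≤ 1 := by
  have h₁ := Real.sqrt_mul_le_add_div_two ha.1 hb.1
  have h₂ := Real.sqrt_mul_le_add_div_two (sub_nonneg.2 ha.2) (sub_nonneg.2 hb.2)
  rw [bernoulliAffinity]
  linarith

lemma bernoulliAffinity_lt_one {a b : ℝ} (ha : a ∈ Set.Icc (0 : ℝ) 1)
    (hb : b ∈ Set.Icc (0 : ℝ) 1) (hab : a ≠ b) : bernoulliAffinity a b < 1 := by
  have h₁ := Real.sqrt_mul_lt_add_div_two ha.1 hb.1 hab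
  have h₂ := Real.sqrt_mul_le_add_div_two (sub_nonneg.2 ha.2) (sub_nonneg.2 hb.2)
  rw [bernoulliAffinity]
  linarith

lemma exists_bernoulliAffinity_sigmoid_le (K : ℝ) {δ : ℝ} (hδ : 0 < δ) :
    ∃ ρ < 1, ∀ u v : ℝ, |u| ≤ K → |v| ≤ K → δ ≤ |u - v| →
      bernoulliAffinity (Real.sigmoid u) (Real.sigmoid v) ≤ ρ := by
  set S : Set (ℝ × ℝ) := Set.Icc (-K) K ×ˢ Set.Icc (-K) K ∩ {q | δ ≤ |q.1 - q.2|}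
  have hS : IsCompact S :=
    (isCompact_Icc.prod isCompact_Icc).inter_right (isClosed_le continuous_const (by fun_prop))
  rcases S.eq_empty_or_nonempty with hS₀ | hS₀
  · refine ⟨0, one_pos, fun u v hu hv huv => ?_⟩
    exact absurd ⟨⟨abs_le.1 hu, abs_le.1 hv⟩, huv⟩ (Set.eq_empty_iff_forall_notMem.1 hS₀ (u, v))
  obtain ⟨q, ⟨-, hq⟩, hmax⟩ := hS.exists_isMaxOn hS₀
    ((continuous_bernoulliAffinity.comp (by fun_prop : Continuous
      fun q : ℝ × ℝ => (Real.sigmoid q.1, Real.sigmoid q.2))).continuousOn)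
  have hq₁₂ : q.1 ≠ q.2 := fun h => hδ.not_ge (by simpa [h] using hq)
  refine ⟨_, bernoulliAffinity_lt_one (Real.sigmoid_mem_Icc _) (Real.sigmoid_mem_Icc _)
    (Real.sigmoid_injective.ne hq₁₂), fun u v hu hv huv => ?_⟩
  exact hmax (a := (u, v)) ⟨⟨abs_le.1 hu, abs_le.1 hv⟩, huv⟩

section Measure

variable {α : Type*} [MeasurableSpace α] {μ : Measure α}

lemma exists_pos_measure_le_abs {f : α → ℝ} (hf : μ {x | f x ≠ 0} ≠ 0) :
    ∃ δ > 0, μ {x | δ ≤ |f x|} ≠ 0 := by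
  by_contra! h
  refine hf (measure_mono_null (fun x hx => ?_) (measure_iUnion_null fun k : ℕ =>
    h (1 / ((k : ℝ) + 1)) Nat.one_div_pos_of_nat))
  obtain ⟨k, hk⟩ := exists_nat_one_div_lt (abs_pos.2 hx)
  exact Set.mem_iUnion.2 ⟨k, hk.le⟩

lemma lintegral_le_mul_add_compl {f : α → ℝ≥0∞} {A : Set α} (hA : MeasurableSet A) {c : ℝ≥0∞}
    (hfA : ∀ᵐ x ∂μ, x ∈ A → f x ≤ c) (hf : ∀ᵐ x ∂μ, f x ≤ 1) :
    ∫⁻ x, f x ∂μ ≤ c * μ A + μ Aᶜ := by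
  rw [← lintegral_add_compl f hA, ← setLIntegral_const, ← setLIntegral_one]
  exact add_le_add (setLIntegral_mono_ae' hA hfA)
    (setLIntegral_mono_ae' hA.compl (hf.mono fun x hx _ => hx))

lemma mul_add_measure_compl_lt_one [IsProbabilityMeasure μ] {A : Set α} (hA : MeasurableSet A)
    (hμA : μ A ≠ 0) {c : ℝ≥0∞} (hc : c < 1) : c * μ A + μ Aᶜ < 1 :=
  calc c * μ A + μ Aᶜ < 1 * μ A + μ Aᶜ := ENNReal.add_lt_add_right (measure_ne_top _ _)
        (ENNReal.mul_lt_mul_left hμA (measure_ne_top _ _) hc)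
    _ = 1 := by rw [one_mul, measure_add_measure_compl hA, measure_univ]

lemma ae_tendsto_prod_zero_of_lintegral_le {Y : ℕ → α → ℝ≥0∞} (hY : ∀ n, Measurable (Y n))
    (hindep : iIndepFun Y μ) {r : ℝ≥0∞} (hr : r < 1) (hle : ∀ n, ∫⁻ x, Y n x ∂μ ≤ r) :
    ∀ᵐ x ∂μ, Tendsto (fun N => ∏ n ∈ Finset.range N, Y n x) atTop (𝓝 0) := by
  obtain ⟨s, hrs, hs1⟩ := exists_between hr
  have hs0 : s ≠ 0 := (zero_le.trans_lt hrs).ne'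
  have hrts : r = r / s * s := (ENNReal.div_mul_cancel hs0 hs1.ne_top).symm
  have hmean (N : ℕ) : ∫⁻ x, ∏ n ∈ Finset.range N, Y n x ∂μ ≤ (r / s) ^ N * s ^ N := by
    rw [lintegral_prod_eq_prod_lintegral_of_indepFun _ _ hindep hY, ← mul_pow, ← hrts]
    simpa using Finset.prod_le_pow_card (Finset.range N) _ _ fun n _ => hle n
  have hmarkov (N : ℕ) : μ {x | s ^ N ≤ ∏ n ∈ Finset.range N, Y n x} ≤ (r / s) ^ N := by
    refine (ENNReal.mul_le_mul_iff_left (pow_ne_zero N hs0) (ENNReal.pow_ne_top hs1.ne_top)).1 ?_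
    rw [mul_comm]
    exact (mul_meas_ge_le_lintegral₀ (Finset.aemeasurable_fun_prod _ fun n _ =>
      (hY n).aemeasurable) _).trans (hmean N)
  have hsum : ∑' N, μ {x | s ^ N ≤ ∏ n ∈ Finset.range N, Y n x} ≠ ∞ := by
    refine ne_top_of_le_ne_top ?_ (ENNReal.tsum_le_tsum hmarkov)
    rw [ENNReal.tsum_geometric]
    exact ENNReal.inv_ne_top.2 (tsub_pos_of_lt (ENNReal.div_lt_of_lt_mul (by simpa using hrs))).ne'
  filter_upwards [ae_eventually_notMem hsum] with x hx
  exact tendsto_of_tendsto_of_tendsto_of_le_of_le' tendsto_const_nhds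
    (ENNReal.tendsto_pow_atTop_nhds_zero_of_lt_one hs1) (.of_forall fun _ => zero_le)
    (hx.mono fun _ hN => (not_le.1 hN).le)

end Measure

section ConditionalLaw

variable {Ω E : Type*} [MeasurableSpace Ω] [MeasurableSpace E] {P : Measure Ω} {μ : Measure E}
  {Φ : Ω → E} {J : Ω → ℝ}

lemma map_restrict_eq_withDensity (hΦ : Measurable Φ) {ι : ℝ} {q : E → ℝ}
    (hq : Integrable q μ) (hq₀ : 0 ≤ q)
    (hlaw : ∀ A, MeasurableSet A →
      P {ω | Φ ω ∈ A ∧ J ω = ι} = ENNReal.ofReal (∫ x in A, q x ∂μ)) :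
    (P.restrict {ω | J ω = ι}).map Φ = μ.withDensity fun x => ENNReal.ofReal (q x) := by
  ext A hA
  rw [Measure.map_apply hΦ hA, Measure.restrict_apply (hΦ hA), withDensity_apply _ hA]
  exact (hlaw A hA).trans
    (ofReal_integral_eq_lintegral_ofReal hq.integrableOn (.of_forall hq₀))

lemma lintegral_comp_eq_of_law (hΦ : Measurable Φ) (hJ : Measurable J)
    (hJval : ∀ ω, J ω = -1 ∨ J ω = 1) {q : ℝ → E → ℝ} (hq : ∀ ι, Measurable (q ι))
    (hqint : ∀ ι, Integrable (q ι) μ) (hq₀ : ∀ ι, 0 ≤ q ι)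
    (hlaw : ∀ A, MeasurableSet A → ∀ ι : ℝ, (ι = -1 ∨ ι = 1) →
      P {ω | Φ ω ∈ A ∧ J ω = ι} = ENNReal.ofReal (∫ x in A, q ι x ∂μ))
    {f : E × ℝ → ℝ≥0∞} (hf : Measurable f) :
    ∫⁻ ω, f (Φ ω, J ω) ∂P = ∫⁻ x, ENNReal.ofReal (q 1 x) * f (x, 1) ∂μ
      + ∫⁻ x, ENNReal.ofReal (q (-1) x) * f (x, -1) ∂μ := by
  have hpiece (ι : ℝ) (hι : ι = -1 ∨ ι = 1) :
      ∫⁻ ω in {ω | J ω = ι}, f (Φ ω, J ω) ∂P = ∫⁻ x, ENNReal.ofReal (q ι x) * f (x, ι) ∂μ := by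
    have hmeas : MeasurableSet {ω | J ω = ι} := hJ (measurableSet_singleton ι)
    have hfι : Measurable fun x => f (x, ι) := hf.comp (measurable_id.prodMk measurable_const)
    rw [setLIntegral_congr_fun hmeas fun ω (hω : J ω = ι) => by rw [hω], ← lintegral_map hfι hΦ,
      map_restrict_eq_withDensity hΦ (hqint ι) (hq₀ ι) fun A hA => hlaw A hA ι hι,
      lintegral_withDensity_eq_lintegral_mul _ (hq ι).ennreal_ofReal hfι]
    rfl
  have hcompl : {ω | J ω = 1}ᶜ = {ω | J ω = -1} := by
    ext ω
    rcases hJval ω with h | h <;> norm_num [h]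
  have hmeas : MeasurableSet {ω | J ω = 1} := hJ (measurableSet_singleton 1)
  rw [← lintegral_add_compl _ hmeas, hcompl, hpiece 1 (.inr rfl), hpiece (-1) (.inl rfl)]

end ConditionalLaw

section LikelihoodRatio

variable {E : Type*} [NormedAddCommGroup E] [InnerProductSpace ℝ E]

lemma abs_mul_inner_le {b B M R : ℝ} (hb : 0 ≤ b) (hbB : b ≤ B) {v x : E} (hv : ‖v‖ ≤ M)
    (hx : ‖x‖ ≤ R) : |b * ⟪v, x⟫| ≤ B * (M * R) := by
  rw [abs_mul, abs_of_nonneg hb]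
  exact mul_le_mul hbB ((abs_real_inner_le_norm v x).trans
    (mul_le_mul hv hx (norm_nonneg _) ((norm_nonneg _).trans hv))) (abs_nonneg _) (hb.trans hbB)

/-- Here `z` is a query together with its response. -/
noncomputable def sqrtLikelihoodRatio (w w₀ : E) (b : ℝ) (z : E × ℝ) : ℝ :=
  √(Real.sigmoid (z.2 * b * ⟪w, z.1⟫) / Real.sigmoid (z.2 * b * ⟪w₀, z.1⟫))

lemma continuous_sqrtLikelihoodRatio (w w₀ : E) (b : ℝ) :
    Continuous (sqrtLikelihoodRatio w w₀ b) := by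
  unfold sqrtLikelihoodRatio
  fun_prop (disch := exact fun _ => (Real.sigmoid_pos _).ne')

lemma sqrtLikelihoodRatio_nonneg (w w₀ : E) (b : ℝ) (z : E × ℝ) :
    0 ≤ sqrtLikelihoodRatio w w₀ b z :=
  Real.sqrt_nonneg _

lemma sq_sqrtLikelihoodRatio (w w₀ : E) (b : ℝ) (z : E × ℝ) :
    sqrtLikelihoodRatio w w₀ b z ^ 2
      = Real.sigmoid (z.2 * b * ⟪w, z.1⟫) / Real.sigmoid (z.2 * b * ⟪w₀, z.1⟫) :=
  Real.sq_sqrt (div_nonneg (Real.sigmoid_nonneg _) (Real.sigmoid_nonneg _))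

variable {Ω : Type*} [MeasurableSpace Ω] [MeasurableSpace E] [BorelSpace E]
  {P : Measure Ω} {μ : Measure E}

lemma lintegral_sqrtLikelihoodRatio [IsFiniteMeasure μ] {Φ : Ω → E} {J : Ω → ℝ}
    (hΦ : Measurable Φ) (hJ : Measurable J) (hJval : ∀ ω, J ω = -1 ∨ J ω = 1) (w w₀ : E) {b : ℝ}
    (hlaw : ∀ A, MeasurableSet A → ∀ ι : ℝ, (ι = -1 ∨ ι = 1) →
      P {ω | Φ ω ∈ A ∧ J ω = ι} = ENNReal.ofReal (∫ x in A, Real.sigmoid (ι * b * ⟪w₀, x⟫) ∂μ)) :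
    ∫⁻ ω, ENNReal.ofReal (sqrtLikelihoodRatio w w₀ b (Φ ω, J ω)) ∂P
      = ∫⁻ x, ENNReal.ofReal
          (bernoulliAffinity (Real.sigmoid (b * ⟪w, x⟫)) (Real.sigmoid (b * ⟪w₀, x⟫))) ∂μ := by
  have hq (ι : ℝ) : Continuous fun x : E => Real.sigmoid (ι * b * ⟪w₀, x⟫) := by fun_prop
  have hterm : Measurable fun x => ENNReal.ofReal (Real.sigmoid (1 * b * ⟪w₀, x⟫)) *
      ENNReal.ofReal (sqrtLikelihoodRatio w w₀ b (x, 1)) :=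
    (hq 1).measurable.ennreal_ofReal.mul
      ((continuous_sqrtLikelihoodRatio w w₀ b).comp (by fun_prop)).measurable.ennreal_ofReal
  rw [lintegral_comp_eq_of_law (f := fun z => ENNReal.ofReal (sqrtLikelihoodRatio w w₀ b z))
    hΦ hJ hJval (fun ι => (hq ι).measurable)
    (fun ι => .of_bound (hq ι).aestronglyMeasurable 1 (.of_forall fun x => by
      rw [Real.norm_of_nonneg (Real.sigmoid_nonneg _)]; exact Real.sigmoid_le_one _))
    (fun ι x => Real.sigmoid_nonneg _) hlaw
    (ENNReal.continuous_ofReal.comp (continuous_sqrtLikelihoodRatio w w₀ b)).measurable,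
    ← lintegral_add_left hterm]
  congr with x
  simp only [sqrtLikelihoodRatio]
  rw [← ENNReal.ofReal_mul (Real.sigmoid_nonneg _), ← ENNReal.ofReal_mul (Real.sigmoid_nonneg _),
    Real.mul_sqrt_div_self _ (Real.sigmoid_pos _), Real.mul_sqrt_div_self _ (Real.sigmoid_pos _),
    ← ENNReal.ofReal_add (Real.sqrt_nonneg _) (Real.sqrt_nonneg _)]
  simp only [bernoulliAffinity, one_mul, neg_mul, Real.sigmoid_neg]

theorem ae_tendsto_prod_sigmoid_div_zero [IsProbabilityMeasure μ] {R : ℝ}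
    (hR : ∀ᵐ x ∂μ, ‖x‖ ≤ R) {βmin βmax : ℝ} (hβmin : 0 < βmin) {β : ℕ → ℝ}
    (hβ : ∀ n, β n ∈ Set.Icc βmin βmax) {φ : ℕ → Ω → E} (hφ : ∀ n, Measurable (φ n))
    {I : ℕ → Ω → ℝ} (hI : ∀ n, Measurable (I n)) (hIval : ∀ n ω, I n ω = -1 ∨ I n ω = 1)
    (hindep : iIndepFun (fun n ω => (φ n ω, I n ω)) P) {w₀ : E}
    (hlaw : ∀ n, ∀ A, MeasurableSet A → ∀ ι : ℝ, (ι = -1 ∨ ι = 1) →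
      P {ω | φ n ω ∈ A ∧ I n ω = ι}
        = ENNReal.ofReal (∫ x in A, Real.sigmoid (ι * β n * ⟪w₀, x⟫) ∂μ))
    {w : E} (hw : μ {x | ⟪w, x⟫ ≠ ⟪w₀, x⟫} ≠ 0) :
    ∀ᵐ ω ∂P, Tendsto (fun N => (∏ n ∈ Finset.range N, Real.sigmoid (I n ω * β n * ⟪w, φ n ω⟫)) /
      ∏ n ∈ Finset.range N, Real.sigmoid (I n ω * β n * ⟪w₀, φ n ω⟫)) atTop (𝓝 0) := by
  have hβpos (n : ℕ) : 0 < β n := hβmin.trans_le (hβ n).1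
  obtain ⟨δ, hδ, hA⟩ := exists_pos_measure_le_abs (f := fun x => ⟪w, x⟫ - ⟪w₀, x⟫)
    (by simpa only [sub_ne_zero] using hw)
  set A := {x | δ ≤ |⟪w, x⟫ - ⟪w₀, x⟫|}
  have hAmeas : MeasurableSet A := measurableSet_le measurable_const (by fun_prop)
  obtain ⟨ρ, hρ1, hρ⟩ :=
    exists_bernoulliAffinity_sigmoid_le (βmax * (max ‖w‖ ‖w₀‖ * R)) (mul_pos hβmin hδ)
  have hround (n : ℕ) : ∫⁻ ω, ENNReal.ofReal (sqrtLikelihoodRatio w w₀ (β n) (φ n ω, I n ω)) ∂P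
      ≤ ENNReal.ofReal ρ * μ A + μ Aᶜ := by
    rw [lintegral_sqrtLikelihoodRatio (hφ n) (hI n) (hIval n) w w₀ (hlaw n)]
    refine lintegral_le_mul_add_compl hAmeas ?_ (.of_forall fun x => ENNReal.ofReal_le_one.2
      (bernoulliAffinity_le_one (Real.sigmoid_mem_Icc _) (Real.sigmoid_mem_Icc _)))
    filter_upwards [hR] with x hx hxA
    refine ENNReal.ofReal_le_ofReal (hρ _ _
      (abs_mul_inner_le (hβpos n).le (hβ n).2 (le_max_left _ _) hx)
      (abs_mul_inner_le (hβpos n).le (hβ n).2 (le_max_right _ _) hx) ?_)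
    rw [← mul_sub, abs_mul, abs_of_pos (hβpos n)]
    exact mul_le_mul (hβ n).1 hxA hδ.le (hβpos n).le
  have hmeas (n : ℕ) : Measurable fun z => ENNReal.ofReal (sqrtLikelihoodRatio w w₀ (β n) z) :=
    (ENNReal.continuous_ofReal.comp (continuous_sqrtLikelihoodRatio w w₀ (β n))).measurable
  have hprod := ae_tendsto_prod_zero_of_lintegral_le
    (fun n => (hmeas n).comp ((hφ n).prodMk (hI n))) (hindep.comp _ hmeas)
    (mul_add_measure_compl_lt_one hAmeas hA (ENNReal.ofReal_lt_one.2 hρ1)) hround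
  filter_upwards [hprod] with ω hω
  have hsq := ((ENNReal.tendsto_toReal ENNReal.zero_ne_top).comp hω).pow 2
  rw [ENNReal.toReal_zero, zero_pow two_ne_zero] at hsq
  refine hsq.congr fun N => ?_
  rw [Function.comp_apply, ENNReal.toReal_prod, ← Finset.prod_pow, ← Finset.prod_div_distrib]
  refine Finset.prod_congr rfl fun n _ => ?_
  rw [Function.comp_apply, ENNReal.toReal_ofReal (sqrtLikelihoodRatio_nonneg _ _ _ _),
    sq_sqrtLikelihoodRatio]

end LikelihoodRatio

lemma tendsto_mul_div_sum_of_tendsto_div {ι : Type*} {W : Finset ι} {i₀ : ι} (hi₀ : i₀ ∈ W)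
    {p : ι → ℝ} (hp : p i₀ ≠ 0) {L : ι → ℕ → ℝ} (hL : ∀ N, L i₀ N ≠ 0)
    (hratio : ∀ j ∈ W, j ≠ i₀ → Tendsto (fun N => L j N / L i₀ N) atTop (𝓝 0)) {i : ι} {c : ℝ}
    (hi : Tendsto (fun N => L i N / L i₀ N) atTop (𝓝 c)) :
    Tendsto (fun N => p i * L i N / ∑ j ∈ W, p j * L j N) atTop (𝓝 (p i * c / p i₀)) := by
  classical
  have hsum : Tendsto (fun N => ∑ j ∈ W, p j * (L j N / L i₀ N)) atTop (𝓝 (p i₀)) := by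
    have hterm (j : ι) (hj : j ∈ W) : Tendsto (fun N => p j * (L j N / L i₀ N)) atTop
        (𝓝 (p j * if j = i₀ then 1 else 0)) := by
      by_cases h : j = i₀
      · subst h
        simp [div_self (hL _)]
      · simpa [h] using (hratio j hj h).const_mul (p j)
    simpa [hi₀] using tendsto_finsetSum W hterm
  refine ((hi.const_mul (p i)).div hsum hp).congr fun N => ?_
  simp_rw [Pi.div_apply, mul_div_assoc']
  rw [← Finset.sum_div, div_div_div_cancel_right₀ (hL N)]

theorem posterior_tendsto_true_weights_general
    (d : ℕ) (W : Finset (EuclideanSpace ℝ (Fin d)))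
    (wtrue : EuclideanSpace ℝ (Fin d)) (hwtrue : wtrue ∈ W)
    (p : EuclideanSpace ℝ (Fin d) → ℝ) (hp : ∀ w ∈ W, 0 < p w)
    (βmin βmax : ℝ) (hβmin : 0 < βmin)
    (β : ℕ → ℝ) (hβmem : ∀ n, β n ∈ Set.Icc βmin βmax)
    {Ω : Type*} [MeasurableSpace Ω] (P : Measure Ω)
    (μ : Measure (EuclideanSpace ℝ (Fin d))) [IsProbabilityMeasure μ]
    (hbdd : ∃ R : ℝ, ∀ᵐ x ∂μ, ‖x‖ ≤ R)
    (φ : ℕ → Ω → EuclideanSpace ℝ (Fin d)) (hφmeas : ∀ n, Measurable (φ n))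
    (I : ℕ → Ω → ℝ) (hImeas : ∀ n, Measurable (I n))
    (hIval : ∀ n ω, I n ω = -1 ∨ I n ω = 1)
    (hindep : iIndepFun (fun n ω => (φ n ω, I n ω)) P)
    (hcond : ∀ n, ∀ A : Set (EuclideanSpace ℝ (Fin d)), MeasurableSet A →
      ∀ ι : ℝ, (ι = -1 ∨ ι = 1) →
        P {ω | φ n ω ∈ A ∧ I n ω = ι}
          = ENNReal.ofReal (∫ x in A, logistic (ι * β n * ⟪wtrue, x⟫) ∂μ))
    (hdiff : ∀ w ∈ W, w ≠ wtrue → 0 < μ {x | ⟪w, x⟫ ≠ ⟪wtrue, x⟫}) :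
    (∀ᵐ ω ∂P, Tendsto
      (fun N =>
        (p wtrue * ∏ n ∈ Finset.range N, logistic (I n ω * β n * ⟪wtrue, φ n ω⟫)) /
          ∑ w' ∈ W, p w' * ∏ n ∈ Finset.range N, logistic (I n ω * β n * ⟪w', φ n ω⟫))
      atTop (𝓝 1)) ∧
    (∀ w ∈ W, w ≠ wtrue → ∀ᵐ ω ∂P, Tendsto
      (fun N =>
        (p w * ∏ n ∈ Finset.range N, logistic (I n ω * β n * ⟪w, φ n ω⟫)) /
          ∑ w' ∈ W, p w' * ∏ n ∈ Finset.range N, logistic (I n ω * β n * ⟪w', φ n ω⟫))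
      atTop (𝓝 0)) := by
  rw [logistic_eq_sigmoid] at hcond ⊢
  obtain ⟨R, hR⟩ := hbdd
  have hratio : ∀ᵐ ω ∂P, ∀ w ∈ W, w ≠ wtrue → Tendsto (fun N =>
      (∏ n ∈ Finset.range N, Real.sigmoid (I n ω * β n * ⟪w, φ n ω⟫)) /
        ∏ n ∈ Finset.range N, Real.sigmoid (I n ω * β n * ⟪wtrue, φ n ω⟫)) atTop (𝓝 0) := by
    refine (eventually_all_finset W).2 fun w hw => ?_
    by_cases hne : w = wtrue
    · exact .of_forall fun _ h => absurd hne h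
    · filter_upwards [ae_tendsto_prod_sigmoid_div_zero hR hβmin hβmem hφmeas hImeas hIval hindep
        hcond (hdiff w hw hne).ne'] with ω h _ using h
  have hL (ω : Ω) (N : ℕ) :
      ∏ n ∈ Finset.range N, Real.sigmoid (I n ω * β n * ⟪wtrue, φ n ω⟫) ≠ 0 :=
    Finset.prod_ne_zero_iff.2 fun n _ => (Real.sigmoid_pos _).ne'
  have hpos := (hp wtrue hwtrue).ne'
  refine ⟨?_, fun w hw hne => ?_⟩ <;> filter_upwards [hratio] with ω hω
  · simpa [div_self hpos] using tendsto_mul_div_sum_of_tendsto_div hwtrue hpos (hL ω) hω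
      (tendsto_const_nhds.congr fun N => (div_self (hL ω N)).symm)
  · simpa using tendsto_mul_div_sum_of_tendsto_div hwtrue hpos (hL ω) hω (hω w hw hne)

/-- Let `W` be a finite hypothesis set of weight vectors containing `w_true`, `p` a prior that is
positive on `W` and sums to one, `(β_n)` rationality parameters in `[β_min, β_max]` with
`0 < β_min ≤ β_max`, `(φ_n)` i.i.d. feature-difference vectors with common distribution `μ` of
bounded support, and `(I_n)` `{-1, +1}`-valued responses, conditionally independent given the
queries, with `P(I_n = ι | φ_n) = σ(ι β_n ⟨w_true, φ_n⟩)` (encoded here by independence of the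
pairs `(φ_n, I_n)` across `n` together with the joint law of each pair). If every `w ∈ W` with
`w ≠ w_true` satisfies `μ({φ : ⟨w, φ⟩ ≠ ⟨w_true, φ⟩}) > 0`, then the Bayesian posterior
`P_N(w) = p(w) ∏_{n < N} σ(I_n β_n ⟨w, φ_n⟩) / ∑_{w' ∈ W} p(w') ∏_{n < N} σ(I_n β_n ⟨w', φ_n⟩)`
satisfies `P_N(w_true) → 1` almost surely and `P_N(w) → 0` almost surely for every
`w ∈ W` with `w ≠ w_true`. -/
theorem posterior_tendsto_true_weights
    (d : ℕ) (W : Finset (EuclideanSpace ℝ (Fin d)))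
    (wtrue : EuclideanSpace ℝ (Fin d)) (hwtrue : wtrue ∈ W)
    (p : EuclideanSpace ℝ (Fin d) → ℝ) (hp : ∀ w ∈ W, 0 < p w)
    (hpsum : ∑ w ∈ W, p w = 1)
    (βmin βmax : ℝ) (hβmin : 0 < βmin) (hβ : βmin ≤ βmax)
    (β : ℕ → ℝ) (hβmem : ∀ n, β n ∈ Set.Icc βmin βmax)
    {Ω : Type*} [MeasurableSpace Ω] (P : Measure Ω) [IsProbabilityMeasure P]
    (μ : Measure (EuclideanSpace ℝ (Fin d))) [IsProbabilityMeasure μ]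
    (hbdd : ∃ R : ℝ, ∀ᵐ x ∂μ, ‖x‖ ≤ R)
    (φ : ℕ → Ω → EuclideanSpace ℝ (Fin d)) (hφmeas : ∀ n, Measurable (φ n))
    (hφlaw : ∀ n, Measure.map (φ n) P = μ)
    (I : ℕ → Ω → ℝ) (hImeas : ∀ n, Measurable (I n))
    (hIval : ∀ n ω, I n ω = -1 ∨ I n ω = 1)
    (hindep : iIndepFun (fun n ω => (φ n ω, I n ω)) P)
    (hcond : ∀ n, ∀ A : Set (EuclideanSpace ℝ (Fin d)), MeasurableSet A →
      ∀ ι : ℝ, (ι = -1 ∨ ι = 1) →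
        P {ω | φ n ω ∈ A ∧ I n ω = ι}
          = ENNReal.ofReal (∫ x in A, logistic (ι * β n * ⟪wtrue, x⟫) ∂μ))
    (hdiff : ∀ w ∈ W, w ≠ wtrue → 0 < μ {x | ⟪w, x⟫ ≠ ⟪wtrue, x⟫}) :
    (∀ᵐ ω ∂P, Tendsto
      (fun N =>
        (p wtrue * ∏ n ∈ Finset.range N, logistic (I n ω * β n * ⟪wtrue, φ n ω⟫)) /
          ∑ w' ∈ W, p w' * ∏ n ∈ Finset.range N, logistic (I n ω * β n * ⟪w', φ n ω⟫))
      atTop (𝓝 1)) ∧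
    (∀ w ∈ W, w ≠ wtrue → ∀ᵐ ω ∂P, Tendsto
      (fun N =>
        (p w * ∏ n ∈ Finset.range N, logistic (I n ω * β n * ⟪w, φ n ω⟫)) /
          ∑ w' ∈ W, p w' * ∏ n ∈ Finset.range N, logistic (I n ω * β n * ⟪w', φ n ω⟫))
      atTop (𝓝 0)) :=
  posterior_tendsto_true_weights_general d W wtrue hwtrue p hp βmin βmax hβmin β hβmem P μ hbdd φ
    hφmeas I hImeas hIval hindep hcond hdiff
end

section
/- Let a, b ∈ ℝ with a·b > 0 (i.e., a and b have the same sign and are nonzero). Then D(β, a, b) = ∑_{ι∈{−1,+1}} σ(ι β b) · log( σ(ι β b) / σ(ι β a) ) converges to 0 as β → ∞, where σ(x) = 1/(1 + exp(−x)). -/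
open Filter Topology

/-- `D(β, a, b) = ∑_{ι ∈ {-1, +1}} σ(ι β b) · log (σ(ι β b) / σ(ι β a))`, the KL divergence
between the Boltzmann-rational response distributions for reward differences `b` and `a`. -/
noncomputable def klD (β a b : ℝ) : ℝ :=
  ∑ ι ∈ ({-1, 1} : Finset ℝ),
    logistic (ι * β * b) * Real.log (logistic (ι * β * b) / logistic (ι * β * a))

lemma logistic_pos (x : ℝ) : 0 < logistic x := by
  unfold logistic
  positivity

lemma one_add_exp_pos (x : ℝ) : (0:ℝ) < 1 + Real.exp x := by positivity

lemma logistic_tendsto_one : Tendsto logistic atTop (𝓝 1) := by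
  have h : Tendsto (fun x : ℝ => 1 / (1 + Real.exp (-x))) atTop (𝓝 (1 / (1 + 0))) := by
    apply Tendsto.div tendsto_const_nhds
    · exact Tendsto.const_add _ (Real.tendsto_exp_neg_atTop_nhds_zero)
    · norm_num
  show Tendsto (fun x : ℝ => 1 / (1 + Real.exp (-x))) atTop (𝓝 1)
  simpa using h

lemma aux_tendsto (b c : ℝ) (hb : 0 < b) (hc : 0 < c) :
    Tendsto (fun β : ℝ => Real.log (1 + Real.exp (β * c)) / (1 + Real.exp (β * b)))
      atTop (𝓝 0) := by
  have hub : Tendsto (fun β : ℝ => Real.exp (-(β * b)) * (Real.log 2 + β * c)) atTop (𝓝 0) := by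
    have h1 : Tendsto (fun β : ℝ => Real.log 2 * Real.exp (-(β * b))) atTop (𝓝 0) := by
      have := (Real.tendsto_exp_neg_atTop_nhds_zero).comp
        (Tendsto.atTop_mul_const hb (tendsto_id (α := ℝ)))
      simpa using this.const_mul (Real.log 2)
    have h2 : Tendsto (fun β : ℝ => (β * b) * Real.exp (-(β * b))) atTop (𝓝 0) := by
      have base := Real.tendsto_pow_mul_exp_neg_atTop_nhds_zero 1
      have := base.comp (Tendsto.atTop_mul_const hb (tendsto_id (α := ℝ)))
      simpa [Function.comp_def] using this
    have h3 : Tendsto (fun β : ℝ => Real.log 2 * Real.exp (-(β * b))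
        + (c / b) * ((β * b) * Real.exp (-(β * b)))) atTop (𝓝 0) := by
      simpa using h1.add (h2.const_mul (c / b))
    have : (fun β : ℝ => Real.exp (-(β * b)) * (Real.log 2 + β * c)) =
        (fun β : ℝ => Real.log 2 * Real.exp (-(β * b))
        + (c / b) * ((β * b) * Real.exp (-(β * b)))) := by
      funext β
      field_simp
    rw [this]
    exact h3
  apply tendsto_of_tendsto_of_tendsto_of_le_of_le' tendsto_const_nhds hub
  · filter_upwards [eventually_ge_atTop (0:ℝ)] with β hβ
    have h1 : (1:ℝ) ≤ 1 + Real.exp (β * c) := by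
      have := Real.exp_pos (β * c); linarith
    exact div_nonneg (Real.log_nonneg h1) (by positivity)
  · filter_upwards [eventually_ge_atTop (0:ℝ)] with β hβ
    have hβc : (0:ℝ) ≤ β * c := mul_nonneg hβ hc.le
    have hβb : (0:ℝ) ≤ β * b := mul_nonneg hβ hb.le
    have hlog : Real.log (1 + Real.exp (β * c)) ≤ Real.log 2 + β * c := by
      have h1 : 1 + Real.exp (β * c) ≤ 2 * Real.exp (β * c) := by
        have := Real.one_le_exp hβc; linarith
      calc Real.log (1 + Real.exp (β * c)) ≤ Real.log (2 * Real.exp (β * c)) :=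
            Real.log_le_log (by positivity) h1
        _ = Real.log 2 + β * c := by
            rw [Real.log_mul (by norm_num) (Real.exp_ne_zero _), Real.log_exp]
    have hden : Real.exp (β * b) ≤ 1 + Real.exp (β * b) := by linarith
    have hinv : 1 / (1 + Real.exp (β * b)) ≤ Real.exp (-(β * b)) := by
      rw [Real.exp_neg, ← one_div]
      exact one_div_le_one_div_of_le (Real.exp_pos _) hden
    have hlognn : 0 ≤ Real.log (1 + Real.exp (β * c)) := by
      apply Real.log_nonneg
      have := Real.exp_pos (β * c); linarith
    calc Real.log (1 + Real.exp (β * c)) / (1 + Real.exp (β * b))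
        = Real.log (1 + Real.exp (β * c)) * (1 / (1 + Real.exp (β * b))) := by ring
      _ ≤ (Real.log 2 + β * c) * Real.exp (-(β * b)) := by
          apply mul_le_mul hlog hinv (by positivity) (by linarith)
      _ = Real.exp (-(β * b)) * (Real.log 2 + β * c) := by ring

lemma klD_tendsto_pos (a b : ℝ) (ha : 0 < a) (hb : 0 < b) :
    Tendsto (fun β : ℝ => klD β a b) atTop (𝓝 0) := by
  have hsum : ∀ β : ℝ, klD β a b =
      logistic (-(β * b)) * Real.log (logistic (-(β * b)) / logistic (-(β * a)))
      + logistic (β * b) * Real.log (logistic (β * b) / logistic (β * a)) := by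
    intro β
    simp [klD, Finset.sum_pair (by norm_num : (-1:ℝ) ≠ 1)]
  have h2 : Tendsto (fun β : ℝ =>
      logistic (β * b) * Real.log (logistic (β * b) / logistic (β * a))) atTop (𝓝 0) := by
    have hbt : Tendsto (fun β : ℝ => logistic (β * b)) atTop (𝓝 1) :=
      logistic_tendsto_one.comp (Tendsto.atTop_mul_const hb (tendsto_id (α := ℝ)))
    have hat : Tendsto (fun β : ℝ => logistic (β * a)) atTop (𝓝 1) :=
      logistic_tendsto_one.comp (Tendsto.atTop_mul_const ha (tendsto_id (α := ℝ)))
    have hratio : Tendsto (fun β : ℝ => logistic (β * b) / logistic (β * a)) atTop (𝓝 1) := by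
      simpa [Pi.div_def] using hbt.div hat (by norm_num)
    have hlog : Tendsto (fun β : ℝ => Real.log (logistic (β * b) / logistic (β * a)))
        atTop (𝓝 0) := by
      have := (Real.continuousAt_log (by norm_num : (1:ℝ) ≠ 0)).tendsto.comp hratio
      simpa [Function.comp_def] using this
    simpa using hbt.mul hlog
  have h1 : Tendsto (fun β : ℝ =>
      logistic (-(β * b)) * Real.log (logistic (-(β * b)) / logistic (-(β * a))))
      atTop (𝓝 0) := by
    have key : ∀ β : ℝ,
        logistic (-(β * b)) * Real.log (logistic (-(β * b)) / logistic (-(β * a)))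
        = Real.log (1 + Real.exp (β * a)) / (1 + Real.exp (β * b))
          - Real.log (1 + Real.exp (β * b)) / (1 + Real.exp (β * b)) := by
      intro β
      have hA : logistic (-(β * a)) = 1 / (1 + Real.exp (β * a)) := by
        simp [logistic]
      have hB : logistic (-(β * b)) = 1 / (1 + Real.exp (β * b)) := by
        simp [logistic]
      rw [hA, hB, Real.log_div (by positivity) (by positivity),
        Real.log_div (by norm_num) (by positivity),
        Real.log_div (by norm_num) (by positivity)]
      simp only [Real.log_one]
      ring
    simp only [key]
    have t1 := aux_tendsto b a hb ha
    have t2 := aux_tendsto b b hb hb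
    simpa using t1.sub t2
  simp only [hsum]
  simpa using h1.add h2

/-- If `a` and `b` have the same sign and are nonzero (i.e. `a * b > 0`), then
`D(β, a, b) → 0` as `β → ∞`. -/
theorem klD_tendsto_zero_of_same_sign (a b : ℝ) (hab : 0 < a * b) :
    Tendsto (fun β : ℝ => klD β a b) atTop (𝓝 0) := by
  rcases mul_pos_iff.mp hab with ⟨ha, hb⟩ | ⟨ha, hb⟩
  · exact klD_tendsto_pos a b ha hb
  · have hneg : ∀ β : ℝ, klD β a b = klD β (-a) (-b) := by
      intro β
      simp [klD, Finset.sum_pair (by norm_num : (-1:ℝ) ≠ 1)]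
      ring_nf
    simp only [hneg]
    exact klD_tendsto_pos (-a) (-b) (by linarith) (by linarith)
end
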